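/- arXiv:cs/9911007 — 5 statements merged into one kernel-verified Lean document; each statement's English description precedes it below -/
import Mathlib

section
/- Let S be an infinite type and let σ : S × S → S be a total associative binary operation (i.e., σ(σ(a,b),c) = σ(a,σ(b,c)) for all a,b,c). Then for every natural number n there exists an element z in the image of σ whose preimage under σ (the set of pairs (x,y) with σ(x,y) = z) has cardinality at least n. -/
/-!
If some left translation `σ b` has an infinite fiber, that fiber alone gives arbitrarily many
preimages. Otherwise every left translation is finite-to-one, so from any `z` one can step to
`σ z e` avoiding any prescribed finite set. By associativity every left divisor of `z`, and `z`
itself, divides `σ z e` on the left, so iterating produces elements with arbitrarily many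
distinct left divisors `x`, each contributing a different pair `(x, y)` to the preimage.
-/

theorem Function.exists_apply_notMem_of_finite_fibers {α β : Type*} [Infinite α] {f : α → β}
    (hf : ∀ b, (f ⁻¹' {b}).Finite) (F : Finset β) : ∃ a, f a ∉ F :=
  (F.finite_toSet.preimage' fun b _ ↦ hf b).infinite_compl.nonempty

namespace BinaryOp

variable {S : Type*} (σ : S → S → S)

def leftDivisors (z : S) : Set S := {x | ∃ y, σ x y = z}

variable {σ}

theorem exists_finset_fiber_of_subset_leftDivisors {z : S} {D : Finset S}
    (hD : ↑D ⊆ leftDivisors σ z) :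
    ∃ T : Finset (S × S), (∀ p ∈ T, σ p.1 p.2 = z) ∧ D.card ≤ T.card := by
  classical
  have hfst : leftDivisors σ z = Prod.fst '' {p : S × S | σ p.1 p.2 = z} := by
    ext x; simp [leftDivisors]
  obtain ⟨T, hT, rfl⟩ := Finset.subset_set_image_iff.1 (hfst ▸ hD)
  exact ⟨T, hT, Finset.card_image_le⟩

theorem exists_finset_fiber_of_infinite {b z : S} (h : (σ b ⁻¹' {z}).Infinite) (n : ℕ) :
    ∃ T : Finset (S × S), (∀ p ∈ T, σ p.1 p.2 = z) ∧ n ≤ T.card := by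
  have hfiber : {p : S × S | σ p.1 p.2 = z}.Infinite :=
    (h.image (Prod.mk_right_injective b).injOn).mono (by rintro _ ⟨y, hy, rfl⟩; exact hy)
  obtain ⟨T, hT, rfl⟩ := hfiber.exists_subset_card_eq n
  exact ⟨T, hT, le_rfl⟩

theorem insert_leftDivisors_subset (hassoc : ∀ a b c : S, σ (σ a b) c = σ a (σ b c))
    (z e : S) : insert z (leftDivisors σ z) ⊆ leftDivisors σ (σ z e) := by
  rintro x (rfl | ⟨y, rfl⟩)
  · exact ⟨e, rfl⟩
  · exact ⟨σ y e, (hassoc x y e).symm⟩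

theorem exists_finset_leftDivisors [Infinite S]
    (hassoc : ∀ a b c : S, σ (σ a b) c = σ a (σ b c)) (hfin : ∀ b w, (σ b ⁻¹' {w}).Finite) :
    ∀ k : ℕ, ∃ z : S, ∃ D : Finset S, z ∉ D ∧ ↑D ⊆ leftDivisors σ z ∧ D.card = k
  | 0 => ⟨Classical.arbitrary S, ∅, by simp⟩
  | k + 1 => by
    classical
    obtain ⟨z, D, hzD, hD, rfl⟩ := exists_finset_leftDivisors hassoc hfin k
    obtain ⟨e, he⟩ := Function.exists_apply_notMem_of_finite_fibers (hfin z) (insert z D)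
    refine ⟨σ z e, insert z D, he, ?_, Finset.card_insert_of_notMem hzD⟩
    rw [Finset.coe_insert]
    exact (Set.insert_subset_insert hD).trans (insert_leftDivisors_subset hassoc z e)

end BinaryOp

open BinaryOp in
theorem total_associative_unbounded_fibers
    {S : Type*} [Infinite S] (σ : S → S → S)
    (hassoc : ∀ a b c : S, σ (σ a b) c = σ a (σ b c)) :
    ∀ n : ℕ, ∃ z : S, (∃ p : S × S, σ p.1 p.2 = z) ∧
      ∃ T : Finset (S × S), (∀ p ∈ T, σ p.1 p.2 = z) ∧ n ≤ T.card := by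
  intro n
  by_cases hinf : ∃ b z, (σ b ⁻¹' {z}).Infinite
  · obtain ⟨b, z, hbz⟩ := hinf
    obtain ⟨y, hy⟩ := hbz.nonempty
    exact ⟨z, ⟨(b, y), hy⟩, exists_finset_fiber_of_infinite hbz n⟩
  · simp only [not_exists, Set.not_infinite] at hinf
    obtain ⟨z, D, -, hD, hcard⟩ := exists_finset_leftDivisors hassoc hinf (n + 1)
    obtain ⟨x, hx⟩ := Finset.card_pos.1 (by omega : 0 < D.card)
    obtain ⟨y, hy⟩ := hD hx
    obtain ⟨T, hT, hDT⟩ := exists_finset_fiber_of_subset_leftDivisors hD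
    exact ⟨z, ⟨(x, y), hy⟩, T, hT, by omega⟩
end

section
/- Let S be an infinite type and let σ : S × S → S be a total associative binary operation. Then there is no constant k such that σ is k-to-one; that is, for every k ∈ ℕ there exists z in the image of σ whose preimage under σ has more than k elements. -/
/-!
Suppose every element of `S` had at most `k` factorizations. The powers `a, a², a³, …` of any
`a` then repeat, since otherwise `a^(k+2) = a^i * a^(k+2-i)` would have `k + 1` factorizations;
so `a` has an idempotent power `a * y`. The map `a ↦ a * y` is again at most `k`-to-one, hence has
infinite range: there are infinitely many idempotents.

With infinitely many idempotents, a single element acquires arbitrarily many left divisors: if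
every `x ∈ T` divides `p`, pick an idempotent `e` with `p * e ∉ T` (the map `e ↦ p * e` is
finite-to-one); then `p * e` and every `x ∈ T` divide `p * e = (p * e) * e`. But `k + 1` left
divisors of one element give `k + 1` factorizations of it.
-/

open Function

def IsKToOne {α β : Type*} (f : α → β) (k : ℕ) : Prop :=
  ∀ b (T : Finset α), (∀ a ∈ T, f a = b) → T.card ≤ k

namespace IsKToOne

variable {α β γ : Type*} {f : α → β} {k : ℕ}

theorem comp_injective (hf : IsKToOne f k) {g : γ → α} (hg : Injective g) :
    IsKToOne (f ∘ g) k := fun b T hT =>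
  (T.card_map ⟨g, hg⟩).symm.trans_le <| hf b _ <| by simpa using hT

theorem finite_preimage_singleton (hf : IsKToOne f k) (b : β) : (f ⁻¹' {b}).Finite := by
  by_contra hinf
  obtain ⟨T, hT, hcard⟩ := Set.Infinite.exists_subset_card_eq hinf (k + 1)
  have := hf b T fun a ha => hT ha
  omega

theorem infinite_image (hf : IsKToOne f k) {s : Set α} (hs : s.Infinite) : (f '' s).Infinite :=
  fun hfin => hs <| (hfin.preimage' fun b _ => hf.finite_preimage_singleton b).subset <|
    Set.subset_preimage_image f s

end IsKToOne

section Semigroup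

variable {S : Type*} [Semigroup S]

theorem iterate_mul_left_mul (a x : S) (n : ℕ) : (a * ·)^[n] a * x = (a * ·)^[n + 1] x := by
  induction n with
  | zero => rfl
  | succ n ih => simp only [iterate_succ_apply', mul_assoc, ih]

theorem exists_isIdempotentElem_iterate_mul_left {a : S}
    (h : ¬Injective fun n => (a * ·)^[n] a) : ∃ n, IsIdempotentElem ((a * ·)^[n + 1] a) := by
  obtain ⟨i, j, hij, hne⟩ := not_injective_iff.mp h
  wlog hlt : i < j generalizing i j
  · exact this j i hij.symm hne.symm (by omega)
  obtain ⟨d, rfl⟩ := Nat.exists_eq_add_of_lt hlt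
  have hper : IsPeriodicPt (a * ·) (d + 1) ((a * ·)^[i] a) := by
    rw [IsPeriodicPt, IsFixedPt, ← iterate_add_apply, show d + 1 + i = i + d + 1 by omega]
    exact hij.symm
  -- `n + 2` is a multiple of the period, and `n + 1 ≥ i` puts `a^(n+2)` on the cycle.
  refine ⟨d * (i + 2) + i, ?_⟩
  have hx : IsPeriodicPt (a * ·) (d + 1) ((a * ·)^[d * (i + 2) + i + 1] a) := by
    rw [show d * (i + 2) + i + 1 = d * (i + 2) + 1 + i by ring, iterate_add_apply]
    exact hper.apply_iterate _
  rw [IsIdempotentElem, iterate_mul_left_mul,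
    show d * (i + 2) + i + 1 + 1 = (i + 2) * (d + 1) by ring]
  exact hx.const_mul (i + 2)

variable {k : ℕ} (hS : IsKToOne (fun p : S × S => p.1 * p.2) k)
include hS

theorem IsKToOne.card_le_of_forall_dvd {p : S} {T : Finset S} (hT : ∀ x ∈ T, x ∣ p) :
    T.card ≤ k := by
  choose! y hy using hT
  exact hS.comp_injective (g := fun x => (x, y x)) (fun _ _ h => congrArg Prod.fst h) p T
    fun x hx => (hy x hx).symm

theorem IsKToOne.mul_left (p : S) : IsKToOne (p * ·) k :=
  hS.comp_injective (Prod.mk_right_injective p)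

theorem IsKToOne.not_injective_iterate_mul_left (a : S) :
    ¬Injective fun n => (a * ·)^[n] a := by
  intro hinj
  have hfac : ∀ i ∈ Finset.range (k + 1),
      (a * ·)^[i] a * (a * ·)^[k - i] a = (a * ·)^[k + 1] a := by
    intro i hi
    rw [Finset.mem_range] at hi
    rw [iterate_mul_left_mul, ← iterate_add_apply, show i + 1 + (k - i) = k + 1 by omega]
  have := hS.comp_injective (g := fun i => ((a * ·)^[i] a, (a * ·)^[k - i] a))
    (fun _ _ h => hinj (congrArg Prod.fst h)) _ _ hfac
  simp at this

theorem IsKToOne.exists_isIdempotentElem_mul (a : S) : ∃ y, IsIdempotentElem (a * y) := by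
  obtain ⟨n, hn⟩ :=
    exists_isIdempotentElem_iterate_mul_left (hS.not_injective_iterate_mul_left a)
  exact ⟨(a * ·)^[n] a, by rwa [iterate_succ_apply'] at hn⟩

theorem IsKToOne.infinite_setOf_isIdempotentElem [Infinite S] :
    {e : S | IsIdempotentElem e}.Infinite := by
  choose y hy using hS.exists_isIdempotentElem_mul
  have hpow : IsKToOne (fun a => a * y a) k :=
    hS.comp_injective (g := fun a => (a, y a)) fun _ _ h => congrArg Prod.fst h
  refine (hpow.infinite_image Set.infinite_univ).mono ?_
  rintro _ ⟨a, -, rfl⟩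
  exact hy a

theorem IsKToOne.exists_finset_card_eq_forall_dvd
    (hE : {e : S | IsIdempotentElem e}.Infinite) (n : ℕ) :
    ∃ p : S, ∃ T : Finset S, T.card = n ∧ ∀ x ∈ T, x ∣ p := by
  classical
  induction n with
  | zero =>
    obtain ⟨e, -⟩ := hE.nonempty
    exact ⟨e, ∅, rfl, by simp⟩
  | succ n ih =>
    obtain ⟨p, T, rfl, hT⟩ := ih
    obtain ⟨e, he, hpe⟩ : ∃ e, IsIdempotentElem e ∧ p * e ∉ T := by
      by_contra! h
      refine (hS.mul_left p).infinite_image hE (T.finite_toSet.subset ?_)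
      rintro _ ⟨e, he, rfl⟩
      exact h e he
    refine ⟨p * e, insert (p * e) T, Finset.card_insert_of_notMem hpe, ?_⟩
    intro x hx
    rcases Finset.mem_insert.mp hx with rfl | hx
    · exact ⟨e, by rw [mul_assoc, he.eq]⟩
    · exact (hT x hx).mul_right e

theorem IsKToOne.finite_setOf_isIdempotentElem : {e : S | IsIdempotentElem e}.Finite := by
  by_contra hE
  obtain ⟨p, T, hcard, hT⟩ := hS.exists_finset_card_eq_forall_dvd hE (k + 1)
  have := hS.card_le_of_forall_dvd hT
  omega

end Semigroup

theorem total_associative_not_constant_to_one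
    {S : Type*} [Infinite S] (σ : S → S → S)
    (hassoc : ∀ a b c : S, σ (σ a b) c = σ a (σ b c)) :
    ∀ k : ℕ, ∃ z : S, (∃ p : S × S, σ p.1 p.2 = z) ∧
      ∃ T : Finset (S × S), (∀ p ∈ T, σ p.1 p.2 = z) ∧ k < T.card := by
  intro k
  by_contra! h
  let _ : Semigroup S := { mul := σ, mul_assoc := hassoc }
  have hS : IsKToOne (fun p : S × S => p.1 * p.2) k := by
    intro z T hT
    rcases T.eq_empty_or_nonempty with rfl | ⟨p, hp⟩
    · simp
    · exact h z ⟨p, hT p hp⟩ T hT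
  exact hS.infinite_setOf_isIdempotentElem hS.finite_setOf_isIdempotentElem
end

section
/- Let S be an infinite type and σ : S × S → S a total associative binary operation. For each w ∈ S define L_w = {x ∈ S : x ≠ w ∧ ∃y, σ(x,y) = w} and R_w = {y ∈ S : y ≠ w ∧ ∃x, σ(x,y) = w}. Then for every n ∈ ℕ there exists z ∈ S (in the image of σ) such that L_z has cardinality at least n or R_z has cardinality at least n. -/
private def prefixProd {S : Type*} (σ : S → S → S) (a : ℕ → S) : ℕ → S
  | 0 => a 0
  | (i+1) => σ (prefixProd σ a i) (a (i+1))

private theorem prefixProd_factor {S : Type*} (σ : S → S → S)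
    (hassoc : ∀ a b c : S, σ (σ a b) c = σ a (σ b c)) (a : ℕ → S) :
    ∀ i j, i < j → ∃ y, σ (prefixProd σ a i) y = prefixProd σ a j := by
  intro i j hij
  induction j with
  | zero => omega
  | succ j ih =>
    rcases Nat.lt_succ_iff_lt_or_eq.mp hij with h | h
    · obtain ⟨y, hy⟩ := ih h
      exact ⟨σ y (a (j+1)), by show σ _ _ = σ (prefixProd σ a j) (a (j+1)); rw [← hy, hassoc]⟩
    · exact ⟨a (j+1), by rw [h]; rfl⟩

theorem total_associative_left_or_right_factors_unbounded
    {S : Type*} [Infinite S] (σ : S → S → S)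
    (hassoc : ∀ a b c : S, σ (σ a b) c = σ a (σ b c)) :
    ∀ n : ℕ, ∃ z : S, (∃ p : S × S, σ p.1 p.2 = z) ∧
      ((∃ T : Finset S, (↑T : Set S) ⊆ {x | x ≠ z ∧ ∃ y, σ x y = z} ∧ n ≤ T.card) ∨
       (∃ T : Finset S, (↑T : Set S) ⊆ {y | y ≠ z ∧ ∃ x, σ x y = z} ∧ n ≤ T.card)) := by
  classical
  by_contra hcon
  push_neg at hcon
  obtain ⟨n, hn⟩ := hcon
  set a : ℕ → S := fun i => Infinite.natEmbedding S i with ha_def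
  have ha : Function.Injective a := fun i j h => (Infinite.natEmbedding S).injective h
  set p : ℕ → S := prefixProd σ a with hp_def
  have hpfac : ∀ i j, i < j → ∃ y, σ (p i) y = p j := prefixProd_factor σ hassoc a
  have hpsucc : ∀ i, p (i+1) = σ (p i) (a (i+1)) := fun i => rfl
  set m := n * n + 1 with hm
  set z := p m with hz_def
  have hzim : ∃ q : S × S, σ q.1 q.2 = z := by
    refine ⟨(p (n*n), a m), ?_⟩
    simp only [hz_def, hm, hpsucc]
  -- the set of prefix values
  set P : Finset S := (Finset.Icc 1 m).image p with hP_def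
  have hzP : z ∈ P := Finset.mem_image.mpr ⟨m, by simp [hm], rfl⟩
  have hPcard : P.card ≤ n := by
    have hsub : (↑(P.erase z) : Set S) ⊆ {x | x ≠ z ∧ ∃ y, σ x y = z} := by
      intro x hx
      simp only [Finset.coe_erase, Set.mem_diff, Finset.mem_coe, Set.mem_singleton_iff] at hx
      obtain ⟨hxP, hxz⟩ := hx
      obtain ⟨i, hi, hpi⟩ := Finset.mem_image.mp hxP
      simp only [Finset.mem_Icc] at hi
      refine ⟨hxz, ?_⟩
      have hilt : i < m := by
        rcases lt_or_eq_of_le hi.2 with h | h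
        · exact h
        · exact absurd (hpi.symm.trans (by rw [h])) hxz
      obtain ⟨y, hy⟩ := hpfac i m hilt
      exact ⟨y, by rw [hpi] at hy; exact hy⟩
    have := (hn z hzim).1 (P.erase z) hsub
    have h2 : P.card = (P.erase z).card + 1 := (Finset.card_erase_add_one hzP).symm
    omega
  -- the letters
  set A : Finset S := (Finset.Icc 1 m).image a with hA_def
  have hAcard : A.card = m := by
    rw [hA_def, Finset.card_image_of_injective _ ha, Nat.card_Icc]; omega
  have hcover : A ⊆ P.biUnion (fun w => A.filter (fun x => ∃ u, σ u x = w)) := by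
    intro x hx
    obtain ⟨i, hi, hai⟩ := Finset.mem_image.mp hx
    simp only [Finset.mem_Icc] at hi
    obtain ⟨j, rfl⟩ : ∃ j, i = j + 1 := ⟨i - 1, by omega⟩
    refine Finset.mem_biUnion.mpr ⟨p (j+1), Finset.mem_image.mpr ⟨j+1, by simp [Finset.mem_Icc]; omega, rfl⟩, ?_⟩
    refine Finset.mem_filter.mpr ⟨hx, ⟨p j, ?_⟩⟩
    rw [← hai]
    exact (hpsucc j).symm
  have hbound : ∀ w ∈ P, (A.filter (fun x => ∃ u, σ u x = w)).card ≤ n := by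
    intro w hw
    obtain ⟨i, hi, hpi⟩ := Finset.mem_image.mp hw
    simp only [Finset.mem_Icc] at hi
    obtain ⟨j, rfl⟩ : ∃ j, i = j + 1 := ⟨i - 1, by omega⟩
    have hwim : ∃ q : S × S, σ q.1 q.2 = w := ⟨(p j, a (j+1)), by rw [← hpi]; exact (hpsucc j).symm⟩
    set B := A.filter (fun x => ∃ u, σ u x = w) with hB
    have hsub : (↑(B.erase w) : Set S) ⊆ {y | y ≠ w ∧ ∃ x, σ x y = w} := by
      intro x hx
      simp only [Finset.coe_erase, Set.mem_diff, Finset.mem_coe, Set.mem_singleton_iff] at hx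
      obtain ⟨hxB, hxw⟩ := hx
      exact ⟨hxw, (Finset.mem_filter.mp hxB).2⟩
    have h1 := (hn w hwim).2 (B.erase w) hsub
    have h2 : B ⊆ insert w (B.erase w) := Finset.subset_insert_iff.mpr (Finset.Subset.refl _)
    have h3 := Finset.card_le_card h2
    have h4 := Finset.card_insert_le w (B.erase w)
    omega
  have hfinal := Finset.card_biUnion_le_card_mul P _ n hbound
  have h5 : A.card ≤ P.card * n := le_trans (Finset.card_le_card hcover) hfinal
  rw [hAcard, hm] at h5
  have h6 : P.card * n ≤ n * n := Nat.mul_le_mul_right n hPcard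
  exact Nat.not_succ_le_self _ (le_trans h5 h6)
end

section
/- Fix a type X with a linear order and a 'witness' relation W : X → Set X such that for all x, x ∉ W(x). Define a partial binary operation σ on X × X as follows: σ((x,w₁),(y,w₂)) is defined iff x = y and one of the following holds: (i) w₁ ∈ W(x) and w₂ ∈ W(x), in which case the output is (x, min(w₁,w₂)); (ii) w₁ = x and w₂ ∈ W(x), or w₁ ∈ W(x) and w₂ = x, in which case the output is (x,x). Then the ⊥-absorbing extension σ̂ of σ is commutative and associative: for all a,b,c ∈ X × X, σ̂(a,b) = σ̂(b,a) and σ̂(σ̂(a,b),c) = σ̂(a,σ̂(b,c)). -/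
open Classical in
/-- The Hemaspaandra–Rothe 'Swiss cheese' partial operation on pairs. -/
noncomputable def officer {X : Type*} [LinearOrder X] (W : X → Set X) :
    X × X → X × X → Option (X × X) := fun p q =>
  if p.1 = q.1 ∧ p.2 ∈ W p.1 ∧ q.2 ∈ W p.1 then some (p.1, min p.2 q.2)
  else if p.1 = q.1 ∧ p.2 = p.1 ∧ q.2 ∈ W p.1 then some (p.1, p.1)
  else if p.1 = q.1 ∧ p.2 ∈ W p.1 ∧ q.2 = p.1 then some (p.1, p.1)
  else none

/-- The ⊥-absorbing extension of a partial binary operation. -/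
def hatExt {S : Type*} (σ : S → S → Option S) : Option S → Option S → Option S
  | some a, some b => σ a b
  | _, _ => none

theorem officer_commutative_associative
    {X : Type*} [LinearOrder X] (W : X → Set X)
    (hW : ∀ x : X, x ∉ W x) :
    ∀ a b c : X × X,
      hatExt (officer W) (some a) (some b) = hatExt (officer W) (some b) (some a) ∧
      hatExt (officer W) (hatExt (officer W) (some a) (some b)) (some c) =
        hatExt (officer W) (some a) (hatExt (officer W) (some b) (some c)) := by
  rintro ⟨x, w1⟩ ⟨y, w2⟩ ⟨z, w3⟩
  have hmin : ∀ t u v : X, u ∈ W t → v ∈ W t → min u v ∈ W t := by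
    intro t u v hu hv
    rcases min_choice u v with h | h <;> rw [h] <;> assumption
  constructor
  · simp only [hatExt, officer]
    by_cases hxy : x = y
    · subst hxy
      split_ifs <;> simp_all [min_comm]
    · simp [hxy, Ne.symm hxy]
  · by_cases hxy : x = y
    · subst hxy
      by_cases hyz : x = z
      · subst hyz
        simp only [hatExt, officer]
        by_cases h1 : w1 ∈ W x <;> by_cases h2 : w2 ∈ W x <;> by_cases h3 : w3 ∈ W x <;>
          by_cases e1 : w1 = x <;> by_cases e2 : w2 = x <;> by_cases e3 : w3 = x <;>
          simp_all [hatExt, officer, min_assoc, hmin]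
      · simp only [hatExt, officer]
        split_ifs <;> simp_all [hatExt, officer]
    · simp only [hatExt, officer]
      split_ifs <;> simp_all [hatExt, officer]
end

section
/- With τ as in the previous construction (τ((x,w),(x,w)) = (x,w) for w ∈ W(x); τ((x,x),(x,w)) = τ((x,w),(x,x)) = (x,x) for w ∈ W(x); undefined otherwise), suppose there exist x₀ ∈ X and distinct witnesses w₁ ≠ w₂ in W(x₀), and suppose t ∈ X × X is an element not in the domain-closure of τ in the sense that t ≠ (x,x) for all x and t ≠ (x,w) for all x and w ∈ W(x). Define the total extension τ̃ by τ̃(a,b) = τ(a,b) on the domain of τ and τ̃(a,b) = t otherwise. Then τ̃ is not weakly associative: taking a = (x₀,w₁), b = (x₀,w₂), c = (x₀,x₀), we have τ̃(τ̃(a,b),c) = t ≠ (x₀,x₀) = τ̃(a, τ̃(b,c)). -/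
open Classical in
/-- The Rabi–Sherman style weakly associative partial operation on pairs. -/
noncomputable def tauOp {X : Type*} (W : X → Set X) :
    X × X → X × X → Option (X × X) := fun p q =>
  if p = q ∧ p.2 ∈ W p.1 then some p
  else if p.1 = q.1 ∧ p.2 = p.1 ∧ q.2 ∈ W q.1 then some (p.1, p.1)
  else if p.1 = q.1 ∧ q.2 = q.1 ∧ p.2 ∈ W p.1 then some (p.1, p.1)
  else none

theorem totality_construction_fails_weak_associativity
    {X : Type*} (W : X → Set X) (hW : ∀ x : X, x ∉ W x)
    (x₀ : X) (w₁ w₂ : X) (hw₁ : w₁ ∈ W x₀) (hw₂ : w₂ ∈ W x₀) (hne : w₁ ≠ w₂)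
    (t : X × X)
    (ht₁ : ∀ x : X, t ≠ (x, x))
    (ht₂ : ∀ x w : X, w ∈ W x → t ≠ (x, w)) :
    (tauOp W ((tauOp W (x₀, w₁) (x₀, w₂)).getD t) (x₀, x₀)).getD t = t ∧
    t ≠ (x₀, x₀) ∧
    (tauOp W (x₀, w₁) ((tauOp W (x₀, w₂) (x₀, x₀)).getD t)).getD t = (x₀, x₀) := by
  have hw₁x : w₁ ≠ x₀ := fun h => hW x₀ (h ▸ hw₁)
  have hw₂x : w₂ ≠ x₀ := fun h => hW x₀ (h ▸ hw₂)
  have h1 : tauOp W (x₀, w₁) (x₀, w₂) = none := by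
    unfold tauOp
    rw [if_neg, if_neg, if_neg]
    · rintro ⟨-, h, -⟩; exact hw₂x h
    · rintro ⟨-, h, -⟩; exact hw₁x h
    · rintro ⟨h, -⟩; exact hne (congrArg Prod.snd h)
  have h2 : tauOp W t (x₀, x₀) = none := by
    unfold tauOp
    rw [if_neg, if_neg, if_neg]
    · rintro ⟨h, -, hm⟩
      rw [h] at hm
      exact ht₂ x₀ t.2 hm (Prod.ext h rfl)
    · rintro ⟨h, h', -⟩
      exact ht₁ x₀ (Prod.ext h (h'.trans h))
    · rintro ⟨h, -⟩; exact ht₁ x₀ h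
  have h3 : tauOp W (x₀, w₂) (x₀, x₀) = some (x₀, x₀) := by
    unfold tauOp
    rw [if_neg, if_neg, if_pos]
    · exact ⟨rfl, rfl, hw₂⟩
    · rintro ⟨-, h, -⟩; exact hw₂x h
    · rintro ⟨h, -⟩; exact hw₂x (congrArg Prod.snd h)
  have h4 : tauOp W (x₀, w₁) (x₀, x₀) = some (x₀, x₀) := by
    unfold tauOp
    rw [if_neg, if_neg, if_pos]
    · exact ⟨rfl, rfl, hw₁⟩
    · rintro ⟨-, h, -⟩; exact hw₁x h
    · rintro ⟨h, -⟩; exact hw₁x (congrArg Prod.snd h)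
  refine ⟨?_, ht₁ x₀, ?_⟩
  · rw [h1]; simp [h2]
  · rw [h3]; simp [h4]
end
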